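/- arXiv:math/0112232 — 6 statements merged into one kernel-verified Lean document; each statement's English description precedes it below -/
import Mathlib

section
/- Small gain lemma for asymptotic amplitude: if behaviors R and S have Cauchy gains γ₁, γ₂ ∈ K∞ respectively, and γ₁(γ₂(r)) < r for all r > 0, then for every pair (ω, η) with (ω, η) ∈ R and (η, ω) ∈ S and ‖ω‖_aa < ∞, one has ‖ω‖_aa = ‖η‖_aa = 0. -/
open Filter
open scoped NNReal ENNReal

/-- Asymptotic amplitude of a signal `ω : ℝ≥0 → M`:
`‖ω‖_aa = lim_{T→∞} sup_{t,s ≥ T} dist (ω t) (ω s)`. -/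
noncomputable def asympAmp {M : Type*} [PseudoMetricSpace M] (ω : ℝ≥0 → M) : ℝ≥0∞ :=
  Filter.limsup (fun p : ℝ≥0 × ℝ≥0 => edist (ω p.1) (ω p.2)) (atTop ×ˢ atTop)

/-- A behavior with input-value space `U` and output-value space `Y`: a relation between
`U`-valued and `Y`-valued signals. -/
abbrev Behavior (U Y : Type*) := Set ((ℝ≥0 → U) × (ℝ≥0 → Y))

/-- Class `K∞` functions: continuous, strictly increasing, unbounded, vanishing at `0`. -/
def KInfty (γ : ℝ≥0 → ℝ≥0) : Prop :=
  Continuous γ ∧ StrictMono γ ∧ γ 0 = 0 ∧ Tendsto γ atTop atTop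

/-- Extension of a gain function to `[0,∞]`, sending `∞` to `∞`. -/
noncomputable def extGain (γ : ℝ≥0 → ℝ≥0) : ℝ≥0∞ → ℝ≥0∞ :=
  fun x => if x = ⊤ then ⊤ else (γ x.toNNReal : ℝ≥0∞)

/-- `R` has Cauchy gain `γ` : `‖η‖_aa ≤ γ (‖ω‖_aa)` for all `(ω, η) ∈ R`. -/
def HasCauchyGain {U Y : Type*} [MetricSpace U] [MetricSpace Y]
    (R : Behavior U Y) (γ : ℝ≥0 → ℝ≥0) : Prop :=
  ∀ p ∈ R, asympAmp p.2 ≤ extGain γ (asympAmp p.1)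

/-- `R` has incremental limit gain `κ` : whenever both inputs converge,
`limsup_{t→∞} dist (η₁ t) (η₂ t) ≤ κ (dist ω₁^∞ ω₂^∞)`. -/
def HasIncrLimitGain {U Y : Type*} [MetricSpace U] [MetricSpace Y]
    (R : Behavior U Y) (κ : ℝ≥0 → ℝ≥0) : Prop :=
  ∀ p q, p ∈ R → q ∈ R → ∀ u₁ u₂ : U,
    Tendsto p.1 atTop (nhds u₁) → Tendsto q.1 atTop (nhds u₂) →
    Filter.limsup (fun t => edist (p.2 t) (q.2 t)) atTop ≤ (κ (nndist u₁ u₂) : ℝ≥0∞)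

/-! Write `a = ‖ω‖_aa` and `b = ‖η‖_aa`. Both are finite, since `b ≤ γ₁ a`. A positive `b`
would satisfy `b ≤ γ₁ a ≤ γ₁ (γ₂ b) < b`; hence `b = 0` and then `a ≤ γ₂ 0 = 0`. -/
theorem NNReal.eq_zero_of_small_gain {γ₁ γ₂ : ℝ≥0 → ℝ≥0} (hγ₁ : Monotone γ₁) (hγ₂ : γ₂ 0 = 0)
    (hsg : ∀ r : ℝ≥0, 0 < r → γ₁ (γ₂ r) < r) {a b : ℝ≥0}
    (hb : b ≤ γ₁ a) (ha : a ≤ γ₂ b) : a = 0 ∧ b = 0 := by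
  have hb0 : b = 0 := by
    by_contra hne
    have hpos : 0 < b := pos_iff_ne_zero.mpr hne
    exact (hb.trans (hγ₁ ha)).not_gt (hsg b hpos)
  refine ⟨nonpos_iff_eq_zero.mp ?_, hb0⟩
  simpa [hb0, hγ₂] using ha

theorem extGain_of_ne_top (γ : ℝ≥0 → ℝ≥0) {x : ℝ≥0∞} (hx : x ≠ ⊤) :
    extGain γ x = γ x.toNNReal := if_neg hx

theorem ENNReal.eq_zero_of_small_gain {γ₁ γ₂ : ℝ≥0 → ℝ≥0} (hγ₁ : Monotone γ₁) (hγ₂ : γ₂ 0 = 0)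
    (hsg : ∀ r : ℝ≥0, 0 < r → γ₁ (γ₂ r) < r) {a b : ℝ≥0∞} (ha_fin : a ≠ ⊤)
    (hb : b ≤ extGain γ₁ a) (ha : a ≤ extGain γ₂ b) : a = 0 ∧ b = 0 := by
  rw [extGain_of_ne_top γ₁ ha_fin] at hb
  have hb_fin : b ≠ ⊤ := ne_top_of_le_ne_top ENNReal.coe_ne_top hb
  rw [extGain_of_ne_top γ₂ hb_fin] at ha
  rw [← ENNReal.coe_toNNReal ha_fin, ← ENNReal.coe_toNNReal hb_fin] at ha hb ⊢
  simpa using NNReal.eq_zero_of_small_gain hγ₁ hγ₂ hsg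
    (ENNReal.coe_le_coe.mp hb) (ENNReal.coe_le_coe.mp ha)

theorem stmt2_general {U Y : Type*} [MetricSpace U] [MetricSpace Y]
    (R : Behavior U Y) (S : Behavior Y U) (γ₁ γ₂ : ℝ≥0 → ℝ≥0)
    (hγ₁ : KInfty γ₁) (hγ₂ : KInfty γ₂)
    (hR : HasCauchyGain R γ₁) (hS : HasCauchyGain S γ₂)
    (hsg : ∀ r : ℝ≥0, 0 < r → γ₁ (γ₂ r) < r)
    (ω : ℝ≥0 → U) (η : ℝ≥0 → Y)
    (hmem : (ω, η) ∈ R) (hmem' : (η, ω) ∈ S) (hfin : asympAmp ω ≠ ⊤) :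
    asympAmp ω = 0 ∧ asympAmp η = 0 :=
  ENNReal.eq_zero_of_small_gain hγ₁.2.1.monotone hγ₂.2.2.1 hsg hfin
    (hR (ω, η) hmem) (hS (η, ω) hmem')

/-- Small gain lemma for asymptotic amplitude. -/
theorem stmt2 {U Y : Type*} [MetricSpace U] [MetricSpace Y]
    [CompleteSpace U] [CompleteSpace Y]
    (R : Behavior U Y) (S : Behavior Y U) (γ₁ γ₂ : ℝ≥0 → ℝ≥0)
    (hγ₁ : KInfty γ₁) (hγ₂ : KInfty γ₂)
    (hR : HasCauchyGain R γ₁) (hS : HasCauchyGain S γ₂)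
    (hsg : ∀ r : ℝ≥0, 0 < r → γ₁ (γ₂ r) < r)
    (ω : ℝ≥0 → U) (η : ℝ≥0 → Y)
    (hmem : (ω, η) ∈ R) (hmem' : (η, ω) ∈ S) (hfin : asympAmp ω ≠ ⊤) :
    asympAmp ω = 0 ∧ asympAmp η = 0 :=
  stmt2_general R S γ₁ γ₂ hγ₁ hγ₂ hR hS hsg ω η hmem hmem' hfin
end

section
/- If R and S have incremental limit gains κ₁ and κ₂ respectively, and both have some Cauchy gain, then the cascade S∘R has incremental limit gain κ₂∘κ₁. -/
open Filter
open scoped NNReal ENNReal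

/-- The cascade of two behaviors. -/
def cascade {U Y Z : Type*} (R : Behavior U Y) (S : Behavior Y Z) : Behavior U Z :=
  {p | ∃ η : ℝ≥0 → Y, (p.1, η) ∈ R ∧ (η, p.2) ∈ S}


lemma asympAmp_eq_zero_of_tendsto {M : Type*} [PseudoMetricSpace M] {ω : ℝ≥0 → M} {u : M}
    (h : Tendsto ω atTop (nhds u)) : asympAmp ω = 0 := by
  unfold asympAmp
  have ht : Tendsto (fun p : ℝ≥0 × ℝ≥0 => edist (ω p.1) (ω p.2)) (atTop ×ˢ atTop)
      (nhds (edist u u)) := by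
    exact (continuous_edist.tendsto (u, u)).comp
      ((h.comp tendsto_fst).prodMk_nhds (h.comp tendsto_snd))
  rw [edist_self] at ht
  exact ht.limsup_eq

lemma tendsto_of_asympAmp_eq_zero {M : Type*} [MetricSpace M] [CompleteSpace M] {ω : ℝ≥0 → M}
    (h : asympAmp ω = 0) : ∃ u, Tendsto ω atTop (nhds u) := by
  have hc : CauchySeq ω := by
    rw [EMetric.cauchySeq_iff]
    intro ε hε
    have hev : ∀ᶠ p : ℝ≥0 × ℝ≥0 in atTop ×ˢ atTop, edist (ω p.1) (ω p.2) < ε := by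
      refine Filter.eventually_lt_of_limsup_lt ?_ (Filter.isBoundedUnder_of ⟨⊤, fun _ => le_top⟩)
      rw [show Filter.limsup (fun p : ℝ≥0 × ℝ≥0 => edist (ω p.1) (ω p.2)) (atTop ×ˢ atTop)
        = asympAmp ω from rfl, h]
      exact hε
    rw [prod_atTop_atTop_eq, eventually_atTop] at hev
    obtain ⟨N, hN⟩ := hev
    exact ⟨max N.1 N.2, fun m hm n hn =>
      hN (m, n) ⟨le_trans (le_max_left _ _) hm, le_trans (le_max_right _ _) hn⟩⟩
  exact cauchySeq_tendsto_of_complete hc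

/-- Incremental limit gains compose under cascade, provided both behaviors admit
some Cauchy gain. -/
theorem stmt5 {U Y Z : Type*} [MetricSpace U] [MetricSpace Y] [MetricSpace Z]
    [CompleteSpace U] [CompleteSpace Y] [CompleteSpace Z]
    (R : Behavior U Y) (S : Behavior Y Z) (κ₁ κ₂ : ℝ≥0 → ℝ≥0)
    (hκ₁ : KInfty κ₁) (hκ₂ : KInfty κ₂)
    (hRi : HasIncrLimitGain R κ₁) (hSi : HasIncrLimitGain S κ₂)
    (hRc : ∃ γ, KInfty γ ∧ HasCauchyGain R γ)
    (hSc : ∃ γ, KInfty γ ∧ HasCauchyGain S γ) :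
    HasIncrLimitGain (cascade R S) (κ₂ ∘ κ₁) := by
  rintro p q ⟨η₁, hR1, hS1⟩ ⟨η₂, hR2, hS2⟩ u₁ u₂ hu₁ hu₂
  obtain ⟨γ, hγK, hγc⟩ := hRc
  have h1 : asympAmp η₁ = 0 := by
    have := hγc _ hR1
    simp only [asympAmp_eq_zero_of_tendsto hu₁, extGain] at this
    simpa [hγK.2.2.1] using this
  have h2 : asympAmp η₂ = 0 := by
    have := hγc _ hR2
    simp only [asympAmp_eq_zero_of_tendsto hu₂, extGain] at this
    simpa [hγK.2.2.1] using this
  obtain ⟨y₁, hy₁⟩ := tendsto_of_asympAmp_eq_zero h1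
  obtain ⟨y₂, hy₂⟩ := tendsto_of_asympAmp_eq_zero h2
  have hlim1 := hRi (p.1, η₁) (q.1, η₂) hR1 hR2 u₁ u₂ hu₁ hu₂
  have hte : Tendsto (fun t => edist (η₁ t) (η₂ t)) atTop (nhds (edist y₁ y₂)) :=
    (continuous_edist.tendsto (y₁, y₂)).comp (hy₁.prodMk_nhds hy₂)
  have hd : (nndist y₁ y₂ : ℝ≥0∞) ≤ (κ₁ (nndist u₁ u₂) : ℝ≥0∞) := by
    rw [← edist_nndist, ← hte.limsup_eq]
    exact hlim1
  have hd' : nndist y₁ y₂ ≤ κ₁ (nndist u₁ u₂) := by exact_mod_cast hd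
  have hlim2 := hSi (η₁, p.2) (η₂, q.2) hS1 hS2 y₁ y₂ hy₁ hy₂
  exact hlim2.trans (by exact_mod_cast hκ₂.2.1.monotone hd')
end

section
/- For any precompact function ω : [0,∞) → M, the asymptotic amplitude equals the diameter of the omega-limit set: ‖ω‖_aa = diam(Ω⁺[ω]). In general (without precompactness), diam(Ω⁺[ω]) ≤ ‖ω‖_aa. -/
open Filter
open scoped NNReal ENNReal

/-- The omega-limit set `Ω⁺[ω]` of a signal `ω : ℝ≥0 → M`. -/
def omegaLim {M : Type*} [MetricSpace M] (ω : ℝ≥0 → M) : Set M :=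
  {u | ∃ t : ℕ → ℝ≥0, Tendsto t atTop atTop ∧ Tendsto (fun n => ω (t n)) atTop (nhds u)}

/-- `ω` is precompact: its image lies in a compact set. -/
def Precompact {M : Type*} [MetricSpace M] (ω : ℝ≥0 → M) : Prop :=
  ∃ K : Set M, IsCompact K ∧ ∀ t, ω t ∈ K

private lemma aux_tendsto {t : ℕ → ℝ≥0} (h : ∀ n : ℕ, (n : ℝ≥0) ≤ t n) :
    Tendsto t atTop atTop :=
  tendsto_atTop_mono h tendsto_natCast_atTop_atTop

/-- `diam Ω⁺[ω] ≤ ‖ω‖_aa` in general, with equality when `ω` is precompact. -/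
theorem stmt10 {M : Type*} [MetricSpace M] (ω : ℝ≥0 → M) :
    EMetric.diam (omegaLim ω) ≤ asympAmp ω ∧
    (Precompact ω → asympAmp ω = EMetric.diam (omegaLim ω)) := by
  have h1 : EMetric.diam (omegaLim ω) ≤ asympAmp ω := by
    apply EMetric.diam_le
    rintro u ⟨t, ht, htu⟩ v ⟨s, hs, hsv⟩
    refine le_of_forall_gt_imp_ge_of_dense fun c hc => ?_
    have hev : ∀ᶠ p : ℝ≥0 × ℝ≥0 in atTop ×ˢ atTop,
        edist (ω p.1) (ω p.2) < c := eventually_lt_of_limsup_lt hc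
    have hev' : ∀ᶠ n in atTop, edist (ω (t n)) (ω (s n)) < c :=
      (ht.prodMk hs).eventually hev
    exact le_of_tendsto (htu.edist hsv) (hev'.mono fun n h => h.le)
  refine ⟨h1, fun ⟨K, hK, hKmem⟩ => ?_⟩
  refine le_antisymm ?_ h1
  set d := EMetric.diam (omegaLim ω) with hd
  refine le_of_forall_gt_imp_ge_of_dense fun c hc => ?_
  by_contra hlt
  push_neg at hlt
  have hfreq : ∃ᶠ p : ℝ≥0 × ℝ≥0 in atTop ×ˢ atTop, c < edist (ω p.1) (ω p.2) := by
    by_contra hh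
    rw [not_frequently] at hh
    exact absurd (limsup_le_of_le (by isBoundedDefault)
      (hh.mono fun p hp => not_lt.mp hp)) (not_le.mpr hlt)
  rw [Filter.prod_atTop_atTop_eq, frequently_atTop] at hfreq
  choose b hb hcb using fun n : ℕ => hfreq ((n : ℝ≥0), (n : ℝ≥0))
  obtain ⟨u, _, φ, hφ, hu⟩ := hK.tendsto_subseq (x := fun n => ω (b n).1)
    (fun n => hKmem _)
  obtain ⟨v, _, ψ, hψ, hv⟩ := hK.tendsto_subseq (x := fun n => ω (b (φ n)).2)
    (fun n => hKmem _)
  have hb1 : ∀ n : ℕ, (n : ℝ≥0) ≤ (b n).1 := fun n => (Prod.le_def.mp (hb n)).1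
  have hb2 : ∀ n : ℕ, (n : ℝ≥0) ≤ (b n).2 := fun n => (Prod.le_def.mp (hb n)).2
  have hnmono : ∀ n : ℕ, (n : ℝ≥0) ≤ (φ (ψ n) : ℝ≥0) := fun n => by
    exact_mod_cast (hψ.le_apply.trans hφ.le_apply : n ≤ φ (ψ n))
  have humem : u ∈ omegaLim ω :=
    ⟨fun n => (b (φ (ψ n))).1,
      aux_tendsto fun n => (hnmono n).trans (hb1 _),
      (hu.comp hψ.tendsto_atTop)⟩
  have hvmem : v ∈ omegaLim ω :=
    ⟨fun n => (b (φ (ψ n))).2,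
      aux_tendsto fun n => (hnmono n).trans (hb2 _), hv⟩
  have htend : Tendsto (fun n => edist (ω (b (φ (ψ n))).1) (ω (b (φ (ψ n))).2))
      atTop (nhds (edist u v)) := (hu.comp hψ.tendsto_atTop).edist hv
  have hcle : c ≤ edist u v :=
    ge_of_tendsto htend (Eventually.of_forall fun n => (hcb _).le)
  exact absurd (hcle.trans (EMetric.edist_le_diam_of_mem humem hvmem))
    (not_le.mpr hc)
end

section
/- If ω : [0,∞) → M is continuous and precompact, and U is a set containing Ω⁺[ω], then ‖ω‖_aa ≤ |U|_c, where |U|_c is the supremum of diameters of connected components of U. -/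
open Filter
open scoped NNReal ENNReal

/-- Supremum of the diameters of the connected components of a set. -/
noncomputable def compDiam {M : Type*} [MetricSpace M] (U : Set M) : ℝ≥0∞ :=
  ⨆ x ∈ U, EMetric.diam (connectedComponentIn U x)

open Topology Set Metric

/-!
The tails `closure (ω '' [T, ∞))` form a nested family of compact connected sets whose
intersection is `Ω⁺[ω]`, so `Ω⁺[ω]` is connected and lies in a single connected component of `U`.
By compactness, `ω` eventually enters every neighbourhood of `Ω⁺[ω]`, in particular every
`ε`-thickening, so the asymptotic amplitude is at most `diam Ω⁺[ω] + 2ε`.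
-/

theorem isPreconnected_iInter_of_directed {X ι : Type*} [TopologicalSpace X] [T2Space X]
    [Nonempty ι] {s : ι → Set X} (hdir : Directed (· ⊇ ·) s) (hcpt : ∀ i, IsCompact (s i))
    (hconn : ∀ i, IsPreconnected (s i)) : IsPreconnected (⋂ i, s i) := by
  have hclosed : IsClosed (⋂ i, s i) := isClosed_iInter fun i => (hcpt i).isClosed
  have hS : IsCompact (⋂ i, s i) :=
    (hcpt (Classical.arbitrary ι)).of_isClosed_subset hclosed (iInter_subset _ _)
  rw [isPreconnected_iff_subset_of_fully_disjoint_closed hclosed]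
  intro a b ha hb hab hdisj
  obtain ⟨u, v, hu, hv, hau, hbv, huv⟩ :=
    SeparatedNhds.of_isCompact_isCompact (hS.inter_right ha) (hS.inter_right hb)
      (hdisj.mono inter_subset_right inter_subset_right)
  obtain ⟨i, hi⟩ : ∃ i, s i ⊆ u ∪ v := by
    refine exists_subset_nhds_of_isCompact hdir hcpt fun x hx => (hu.union hv).mem_nhds ?_
    rcases hab hx with hxa | hxb
    exacts [Or.inl (hau ⟨hx, hxa⟩), Or.inr (hbv ⟨hx, hxb⟩)]
  rcases (hconn i).subset_or_subset hu hv huv hi with hsu | hsv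
  · exact .inl fun x hx => (hab hx).resolve_right fun hxb =>
      huv.ne_of_mem (hsu (iInter_subset s i hx)) (hbv ⟨hx, hxb⟩) rfl
  · exact .inr fun x hx => (hab hx).resolve_left fun hxa =>
      huv.ne_of_mem (hau ⟨hx, hxa⟩) (hsv (iInter_subset s i hx)) rfl

theorem limsup_edist_le_ediam_of_tendsto_nhdsSet {α X : Type*} [PseudoEMetricSpace X]
    {l : Filter α} {f : α → X} {s : Set X} (hf : Tendsto f l (𝓝ˢ s)) :
    limsup (fun p : α × α => edist (f p.1) (f p.2)) (l ×ˢ l) ≤ ediam s := by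
  refine ENNReal.le_of_forall_pos_le_add fun ε hε _ => ?_
  have hthick : ∀ᶠ a in l, f a ∈ thickening (ε / 2 : ℝ≥0) s :=
    hf (isOpen_thickening.mem_nhdsSet.2 (self_subset_thickening (by positivity) s))
  calc limsup (fun p : α × α => edist (f p.1) (f p.2)) (l ×ˢ l)
      ≤ ediam (thickening (ε / 2 : ℝ≥0) s) :=
        limsup_le_of_le (by isBoundedDefault)
          ((hthick.prod_mk hthick).mono fun p hp => edist_le_ediam_of_mem hp.1 hp.2)
    _ ≤ ediam s + 2 * (ε / 2 : ℝ≥0) := ediam_thickening_le _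
    _ = ediam s + ε := by
        rw [← ENNReal.coe_ofNat, ← ENNReal.coe_mul, mul_div_cancel₀ _ two_ne_zero]

theorem IsPreconnected.ediam_le_compDiam {M : Type*} [MetricSpace M] {s U : Set M}
    (hs : IsPreconnected s) (hsU : s ⊆ U) : ediam s ≤ compDiam U := by
  rcases s.eq_empty_or_nonempty with rfl | ⟨x, hx⟩
  · simp
  exact (ediam_mono (hs.subset_connectedComponentIn hx hsU)).trans
    (le_iSup₂ (f := fun x (_ : x ∈ U) => ediam (_root_.connectedComponentIn U x)) x (hsU hx))

section omegaLim

variable {M : Type*} [MetricSpace M]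

theorem omegaLim_eq_setOf_mapClusterPt (ω : ℝ≥0 → M) :
    omegaLim ω = {u | MapClusterPt u atTop ω} := by
  ext u
  refine ⟨fun ⟨t, ht, hconv⟩ => hconv.mapClusterPt.of_comp ht, fun hu => ?_⟩
  obtain ⟨t, hconv, ht⟩ := hu.exists_seq_tendsto
  exact ⟨t, ht, hconv⟩

theorem omegaLim_eq_iInter_closure (ω : ℝ≥0 → M) :
    omegaLim ω = ⋂ T : ℝ≥0, closure (ω '' Ici T) := by
  ext u
  simp [omegaLim_eq_setOf_mapClusterPt, mapClusterPt_atTop_iff_forall_mem_closure]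

theorem Precompact.tendsto_nhdsSet_omegaLim {ω : ℝ≥0 → M} (hω : Precompact ω) :
    Tendsto ω atTop (𝓝ˢ (omegaLim ω)) := by
  obtain ⟨K, hK, hmem⟩ := hω
  refine hK.tendsto_nhdsSet_of_mapClusterPt (.of_forall hmem) fun u _ hu => ?_
  rwa [omegaLim_eq_setOf_mapClusterPt]

theorem Precompact.isPreconnected_omegaLim {ω : ℝ≥0 → M} (hω : Precompact ω)
    (hc : Continuous ω) :
    IsPreconnected (omegaLim ω) := by
  obtain ⟨K, hK, hmem⟩ := hω
  rw [omegaLim_eq_iInter_closure]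
  refine isPreconnected_iInter_of_directed ?_ (fun T => ?_) fun T => ?_
  · exact Antitone.directed_ge fun S T hST => closure_mono (image_mono (Ici_subset_Ici.2 hST))
  · exact hK.of_isClosed_subset isClosed_closure
      (closure_minimal (image_subset_iff.2 fun t _ => hmem t) hK.isClosed)
  · exact (isPreconnected_Ici.image ω hc.continuousOn).closure

end omegaLim

/-- For continuous precompact `ω` with `Ω⁺[ω] ⊆ U`, one has `‖ω‖_aa ≤ |U|_c`. -/
theorem stmt11 {M : Type*} [MetricSpace M] (ω : ℝ≥0 → M) (U : Set M)
    (hω : Precompact ω) (hc : Continuous ω) (hU : omegaLim ω ⊆ U) :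
    asympAmp ω ≤ compDiam U :=
  calc asympAmp ω ≤ ediam (omegaLim ω) :=
        limsup_edist_le_ediam_of_tendsto_nhdsSet hω.tendsto_nhdsSet_omegaLim
    _ ≤ compDiam U := (hω.isPreconnected_omegaLim hc).ediam_le_compDiam hU
end

section
/- Under the hypotheses of the omega-limit contraction lemma, R also has incremental limit gain γ on U₀: if (ω₁,η₁),(ω₂,η₂) ∈ R with ω₁, ω₂ convergent to limits in U₀, then both η₁, η₂ converge and dist(lim η₁, lim η₂) ≤ γ(dist(lim ω₁, lim ω₂)). -/
open Filter
open scoped NNReal ENNReal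

/-!
Convergence of an input to `u` forces its omega-limit set into `{u}`, so by `hb` the omega-limit
set of the output lies in `Γ {u}`, whose diameter is at most `γ 0 = 0`. A precompact output with
at most one omega-limit point converges. For two convergent inputs, apply `hb` to the pair
`{u₁, u₂}`: both output limits lie in `Γ {u₁, u₂}`, whose diameter is at most `γ (dist u₁ u₂)`.
-/

section OmegaLimit

variable {M : Type*} [MetricSpace M] {ω : ℝ≥0 → M} {u : M}

lemma MapClusterPt.mem_omegaLim (h : MapClusterPt u atTop ω) : u ∈ omegaLim ω := by
  obtain ⟨t, hω, ht⟩ := h.exists_seq_tendsto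
  exact ⟨t, ht, hω⟩

lemma Filter.Tendsto.omegaLim_subset_singleton (h : Tendsto ω atTop (nhds u)) :
    omegaLim ω ⊆ {u} := by
  rintro v ⟨t, ht, hv⟩
  exact tendsto_nhds_unique hv (h.comp ht)

lemma Precompact.omegaLim_nonempty (hω : Precompact ω) : (omegaLim ω).Nonempty := by
  obtain ⟨K, hK, hmem⟩ := hω
  obtain ⟨v, -, hv⟩ := hK.exists_mapClusterPt (f := atTop)
    (tendsto_principal.mpr (.of_forall hmem))
  exact ⟨v, hv.mem_omegaLim⟩

lemma Precompact.tendsto_of_omegaLim_subset_singleton (hω : Precompact ω)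
    (h : omegaLim ω ⊆ {u}) : Tendsto ω atTop (nhds u) := by
  obtain ⟨K, hK, hmem⟩ := hω
  exact hK.tendsto_nhds_of_unique_mapClusterPt (.of_forall hmem) fun v _ hv ↦ h hv.mem_omegaLim

lemma Precompact.exists_tendsto_of_omegaLim_subsingleton (hω : Precompact ω)
    (h : (omegaLim ω).Subsingleton) : ∃ y, Tendsto ω atTop (nhds y) := by
  obtain ⟨y, hy⟩ := hω.omegaLim_nonempty
  exact ⟨y, hω.tendsto_of_omegaLim_subset_singleton fun z hz ↦ h hz hy⟩

end OmegaLimit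

lemma extGain_coe (γ : ℝ≥0 → ℝ≥0) (x : ℝ≥0) : extGain γ x = γ x := by
  simp [extGain]

section OmegaLimitContraction

variable {U Y : Type*} [MetricSpace U] [MetricSpace Y] {R : Behavior U Y} {U₀ : Set U}
  {γ : ℝ≥0 → ℝ≥0} {Γ : Set U → Set Y}

lemma exists_tendsto_output_of_tendsto_input (hγ₀ : γ 0 = 0)
    (ha : ∀ p ∈ R, omegaLim p.1 ⊆ U₀ → Precompact p.2)
    (hb : ∀ K : Set U, K ⊆ U₀ → IsCompact K →
      ∀ p ∈ R, omegaLim p.1 ⊆ K → omegaLim p.2 ⊆ Γ K)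
    (hc : ∀ K : Set U, K ⊆ U₀ → IsCompact K →
      Metric.ediam (Γ K) ≤ extGain γ (Metric.ediam K))
    {p : (ℝ≥0 → U) × (ℝ≥0 → Y)} (hp : p ∈ R) {u : U} (hu : u ∈ U₀)
    (hpu : Tendsto p.1 atTop (nhds u)) : ∃ y, Tendsto p.2 atTop (nhds y) := by
  have hsub : {u} ⊆ U₀ := Set.singleton_subset_iff.mpr hu
  have hω := hpu.omegaLim_subset_singleton
  have hΓ : (Γ {u}).Subsingleton := by
    rw [← Metric.ediam_eq_zero_iff, ← nonpos_iff_eq_zero]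
    calc Metric.ediam (Γ {u}) ≤ extGain γ (Metric.ediam {u}) := hc {u} hsub isCompact_singleton
      _ = 0 := by rw [Metric.ediam_singleton, ← ENNReal.coe_zero, extGain_coe, hγ₀]
  exact (ha p hp (hω.trans hsub)).exists_tendsto_of_omegaLim_subsingleton
    (hΓ.anti (hb {u} hsub isCompact_singleton p hp hω))

lemma nndist_limit_output_le (hb : ∀ K : Set U, K ⊆ U₀ → IsCompact K →
      ∀ p ∈ R, omegaLim p.1 ⊆ K → omegaLim p.2 ⊆ Γ K)
    (hc : ∀ K : Set U, K ⊆ U₀ → IsCompact K →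
      Metric.ediam (Γ K) ≤ extGain γ (Metric.ediam K))
    {p q : (ℝ≥0 → U) × (ℝ≥0 → Y)} (hp : p ∈ R) (hq : q ∈ R) {u₁ u₂ : U} (hu₁ : u₁ ∈ U₀)
    (hu₂ : u₂ ∈ U₀) (hpu : Tendsto p.1 atTop (nhds u₁)) (hqu : Tendsto q.1 atTop (nhds u₂))
    {y₁ y₂ : Y} (hpy : Tendsto p.2 atTop (nhds y₁)) (hqy : Tendsto q.2 atTop (nhds y₂)) :
    nndist y₁ y₂ ≤ γ (nndist u₁ u₂) := by
  have hsub : {u₁, u₂} ⊆ U₀ := Set.insert_subset hu₁ (Set.singleton_subset_iff.mpr hu₂)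
  have hcpt : IsCompact {u₁, u₂} := (Set.toFinite _).isCompact
  have hy₁ : y₁ ∈ Γ {u₁, u₂} := hb _ hsub hcpt p hp
    (hpu.omegaLim_subset_singleton.trans (by simp)) hpy.mapClusterPt.mem_omegaLim
  have hy₂ : y₂ ∈ Γ {u₁, u₂} := hb _ hsub hcpt q hq
    (hqu.omegaLim_subset_singleton.trans (by simp)) hqy.mapClusterPt.mem_omegaLim
  have h := (Metric.edist_le_ediam_of_mem hy₁ hy₂).trans (hc _ hsub hcpt)
  rwa [Metric.ediam_pair, edist_nndist, edist_nndist, extGain_coe, ENNReal.coe_le_coe] at h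

end OmegaLimitContraction

theorem stmt13_general {U Y : Type*} [MetricSpace U] [MetricSpace Y]
    (R : Behavior U Y) (U₀ : Set U)
    (γ : ℝ≥0 → ℝ≥0) (hγ : KInfty γ) (Γ : Set U → Set Y)
    (ha : ∀ p ∈ R, omegaLim p.1 ⊆ U₀ → Precompact p.2)
    (hb : ∀ K : Set U, K ⊆ U₀ → IsCompact K →
      ∀ p ∈ R, omegaLim p.1 ⊆ K → omegaLim p.2 ⊆ Γ K)
    (hc : ∀ K : Set U, K ⊆ U₀ → IsCompact K →
      EMetric.diam (Γ K) ≤ extGain γ (EMetric.diam K)) :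
    ∀ p q, p ∈ R → q ∈ R → ∀ u₁ u₂ : U, u₁ ∈ U₀ → u₂ ∈ U₀ →
      Tendsto p.1 atTop (nhds u₁) → Tendsto q.1 atTop (nhds u₂) →
      ∃ (y₁ y₂ : Y), Tendsto p.2 atTop (nhds y₁) ∧ Tendsto q.2 atTop (nhds y₂) ∧
        nndist y₁ y₂ ≤ γ (nndist u₁ u₂) := by
  intro p q hp hq u₁ u₂ hu₁ hu₂ hpu hqu
  have hγ₀ : γ 0 = 0 := hγ.2.2.1
  obtain ⟨y₁, hpy⟩ := exists_tendsto_output_of_tendsto_input hγ₀ ha hb hc hp hu₁ hpu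
  obtain ⟨y₂, hqy⟩ := exists_tendsto_output_of_tendsto_input hγ₀ ha hb hc hq hu₂ hqu
  exact ⟨y₁, y₂, hpy, hqy, nndist_limit_output_le hb hc hp hq hu₁ hu₂ hpu hqu hpy hqy⟩

/-- Abstract gain lemma via omega-limit contraction: incremental limit gain conclusion. -/
theorem stmt13 {U Y : Type*} [MetricSpace U] [MetricSpace Y]
    [CompleteSpace U] [CompleteSpace Y]
    (R : Behavior U Y) (U₀ : Set U) (hU₀ : IsCompact U₀)
    (γ : ℝ≥0 → ℝ≥0) (hγ : KInfty γ) (Γ : Set U → Set Y)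
    (ha : ∀ p ∈ R, omegaLim p.1 ⊆ U₀ → Precompact p.2)
    (hb : ∀ K : Set U, K ⊆ U₀ → IsCompact K →
      ∀ p ∈ R, omegaLim p.1 ⊆ K → omegaLim p.2 ⊆ Γ K)
    (hc : ∀ K : Set U, K ⊆ U₀ → IsCompact K →
      EMetric.diam (Γ K) ≤ extGain γ (EMetric.diam K)) :
    ∀ p q, p ∈ R → q ∈ R → ∀ u₁ u₂ : U, u₁ ∈ U₀ → u₂ ∈ U₀ →
      Tendsto p.1 atTop (nhds u₁) → Tendsto q.1 atTop (nhds u₂) →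
      ∃ (y₁ y₂ : Y), Tendsto p.2 atTop (nhds y₁) ∧ Tendsto q.2 atTop (nhds y₂) ∧
        nndist y₁ y₂ ≤ γ (nndist u₁ u₂) :=
  stmt13_general R U₀ γ hγ Γ ha hb hc
end

section
/- For the scalar linear system ż = az + bv with a < 0, the H∞ gain sup_{ω ∈ ℝ} |b|/|iω − a| equals |b/a|. Consequently, for f(x,u) = −α(x) + u·β(x) with equilibrium x̄ = g⁻¹(ū) where g = α/β, the linearization at (x̄, ū) has a = ∂f/∂x(x̄,ū), b = ∂f/∂u(x̄,ū) = β(x̄), and |a/b| = g'(x̄), so the H∞ gain of the linearization equals (g⁻¹)'(ū). -/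
/-!
The transfer function `b / (s - a)` of `ż = a z + b v` has modulus `|b| / |i ω - a|` on the
imaginary axis. Since `|i ω - a| ≥ |Re (i ω - a)| = |a|` with equality at `ω = 0`, the supremum
is `|b / a|`. For the linearization of `ẋ = -α(x) + u β(x)` at the equilibrium, the quotient
rule writes `g' = (α / β)'` as `-a / b`, so `|a / b| = g'(x̄)` when `a < 0 < b`, and the gain
`|b / a|` is `1 / g'(x̄) = (g⁻¹)'(ū)`.
-/

open Complex

lemma abs_le_norm_I_mul_sub (w a : ℝ) : |a| ≤ ‖I * w - a‖ := by
  calc |a| = |(I * (w : ℂ) - (a : ℂ)).re| := by simp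
    _ ≤ ‖I * w - a‖ := abs_re_le_norm _

lemma iSup_abs_div_norm_I_mul_sub {a : ℝ} (ha : a ≠ 0) (b : ℝ) :
    ⨆ w : ℝ, |b| / ‖I * w - a‖ = |b / a| := by
  have hle (w : ℝ) : |b| / ‖I * w - a‖ ≤ |b| / |a| :=
    div_le_div_of_nonneg_left (abs_nonneg b) (abs_pos.mpr ha) (abs_le_norm_I_mul_sub w a)
  have hbdd : BddAbove (Set.range fun w : ℝ => |b| / ‖I * w - a‖) :=
    ⟨|b| / |a|, by rintro _ ⟨w, rfl⟩; exact hle w⟩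
  rw [abs_div]
  refine le_antisymm (ciSup_le hle) ?_
  calc |b| / |a| = |b| / ‖I * (0 : ℝ) - a‖ := by simp [norm_real]
    _ ≤ ⨆ w : ℝ, |b| / ‖I * w - a‖ := le_ciSup hbdd 0

lemma deriv_div_eq_sub_mul_div {α β : ℝ → ℝ} {x : ℝ} (hα : DifferentiableAt ℝ α x)
    (hβ : DifferentiableAt ℝ β x) (hβx : β x ≠ 0) :
    deriv (fun y => α y / β y) x = (deriv α x - α x / β x * deriv β x) / β x := by
  change deriv (α / β) x = _
  rw [deriv_div hα hβ hβx]
  field_simp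

/-- The H∞ gain of `ż = Az + Bv` with `A < 0` is `|B/A|`; for `f(x,u) = -α(x) + u β(x)`
linearized at the equilibrium `x̄` (with `ū = g(x̄)`, `g = α/β`), one has
`A = ∂f/∂x(x̄,ū) = -α'(x̄) + ū β'(x̄)`, `B = ∂f/∂u(x̄,ū) = β(x̄)`, `|A/B| = g'(x̄)`, and
hence the H∞ gain of the linearization equals `(g⁻¹)'(ū) = 1/g'(x̄)`. -/
theorem stmt19 (α β : ℝ → ℝ) (xbar : ℝ)
    (hα : DifferentiableAt ℝ α xbar) (hβ : DifferentiableAt ℝ β xbar)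
    (hβpos : 0 < β xbar) :
    let g : ℝ → ℝ := fun x => α x / β x
    let ubar : ℝ := α xbar / β xbar
    let A : ℝ := -deriv α xbar + ubar * deriv β xbar
    let B : ℝ := β xbar
    A < 0 →
    ((⨆ w : ℝ, |B| / ‖Complex.I * w - A‖) = |B / A| ∧
     |A / B| = deriv g xbar ∧
     (⨆ w : ℝ, |B| / ‖Complex.I * w - A‖) = (deriv g xbar)⁻¹) := by
  intro g ubar A B hA
  have hgain := iSup_abs_div_norm_I_mul_sub hA.ne B
  have hslope : |A / B| = deriv g xbar := by
    rw [abs_of_neg (div_neg_of_neg_of_pos hA hβpos),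
      deriv_div_eq_sub_mul_div hα hβ hβpos.ne', ← neg_div]
    ring
  refine ⟨hgain, hslope, ?_⟩
  rw [hgain, ← hslope, abs_div, abs_div, inv_div]
end
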